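/- arXiv:1108.5422 — 2 statements merged into one kernel-verified Lean document; each statement's English description precedes it below -/
import Mathlib

section
/- Let x be a string of length n with minimal cover array C, and let C^P be the pruned minimal cover array obtained from C. Then the sum of the entries of C^P is at most 2n, i.e., Σ_{i=1}^{n} C^P[i] ≤ 2n. -/
/-- `w` is a (proper, aligned-style) cover of `x`: `|w| < |x|` and there is a set `P`
of 1-based starting positions in `{1,…,n−m+1}` such that `w` occurs at every
position of `P` and the occurrences cover every position `1,…,n`. -/
def IsCover {α : Type*} (w x : List α) : Prop :=
  w.length < x.length ∧
  ∃ P : Finset ℕ,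
    (∀ i ∈ P, 1 ≤ i ∧ i ≤ x.length - w.length + 1) ∧
    (∀ i ∈ P, (x.drop (i - 1)).take w.length = w) ∧
    (P.biUnion fun i => Finset.Icc i (i + w.length - 1)) = Finset.Icc 1 x.length

/-- `u` is a border of `x`: `u ≠ x` and `u` is both a prefix and a suffix of `x`. -/
def IsBorder {α : Type*} (u x : List α) : Prop :=
  u ≠ x ∧ u <+: x ∧ u <:+ x

/-- `C` is the minimal cover array of `x` (1-based): for `1 ≤ i ≤ |x|`, `C i` is the
length of the shortest cover of `x[1..i]` if one exists, and `0` otherwise. -/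
def IsMinCoverArray {α : Type*} (x : List α) (C : ℕ → ℕ) : Prop :=
  ∀ i, 1 ≤ i → i ≤ x.length →
    ((∀ w : List α, ¬ IsCover w (x.take i)) ∧ C i = 0) ∨
    (∃ w : List α, IsCover w (x.take i) ∧ C i = w.length ∧
      ∀ v : List α, IsCover v (x.take i) → w.length ≤ v.length)

/-- `C` is the maximal cover array of `x` (1-based): for `1 ≤ i ≤ |x|`, `C i` is the
length of the longest cover of `x[1..i]` if one exists, and `0` otherwise. -/
def IsMaxCoverArray {α : Type*} (x : List α) (C : ℕ → ℕ) : Prop :=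
  ∀ i, 1 ≤ i → i ≤ x.length →
    ((∀ w : List α, ¬ IsCover w (x.take i)) ∧ C i = 0) ∨
    (∃ w : List α, IsCover w (x.take i) ∧ C i = w.length ∧
      ∀ v : List α, IsCover v (x.take i) → v.length ≤ w.length)

/-- `B` is the border array of `x` (1-based): for `1 ≤ i ≤ |x|`, `B i` is the length
of the longest border of `x[1..i]`. -/
def IsBorderArray {α : Type*} (x : List α) (B : ℕ → ℕ) : Prop :=
  ∀ i, 1 ≤ i → i ≤ x.length →
    ∃ u : List α, IsBorder u (x.take i) ∧ B i = u.length ∧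
      ∀ v : List α, IsBorder v (x.take i) → v.length ≤ u.length

/-- Position `j` of the cover array `C` (of a string of length `n`) is totally covered. -/
def TotallyCovered (n : ℕ) (C : ℕ → ℕ) (j : ℕ) : Prop :=
  C j ≠ 0 ∧ ∃ i, j < i ∧ i ≤ n ∧ C i ≠ 0 ∧
    i - C i + 1 ≤ j - C j + 1 ∧ j - C j + 1 < j

/-- `CP` is the pruned minimal cover array obtained from `C`: entries at totally
covered positions are set to `0`, all other entries are kept. -/
def IsPrunedCoverArray (n : ℕ) (C CP : ℕ → ℕ) : Prop :=
  ∀ j, 1 ≤ j → j ≤ n →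
    (TotallyCovered n C j → CP j = 0) ∧ (¬ TotallyCovered n C j → CP j = C j)

/-- The cover-graph relation `R_γ` on positions `{1,…,n}` induced by the array `γ`:
`p R_γ q` iff there are `i` with `γ i ≠ 0` and `1 ≤ j ≤ γ i` with `{p,q} = {j, i−γ i + j}`. -/
def CoverRel (n : ℕ) (γ : ℕ → ℕ) (p q : ℕ) : Prop :=
  ∃ i j, 1 ≤ i ∧ i ≤ n ∧ γ i ≠ 0 ∧ 1 ≤ j ∧ j ≤ γ i ∧
    ({p, q} : Set ℕ) = {j, i - γ i + j}

/-
Write `s j = j - C j`, the number of letters before the last occurrence of the shortest cover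
of `x[1..j]`. For kept positions `j₀ < j` one has `2 s j₀ + C j₀ ≤ 2 s j`, so the entries of
`C^P` are paid for by the increments of the potential `2 s j`, which never exceeds `2n`.
If the last occurrence at `j` starts later than the one at `j₀` but the inequality fails, the
two occurrences overlap by more than half of the cover `w₀` of `x[1..j₀]`, giving `w₀` a period
`d` with `2d ≤ |w₀|`; then `w₀` minus its first `d` letters covers `w₀`, hence `x[1..j₀]`, against
minimality. If it starts no later, `j₀` escapes being totally covered only when `C j₀ = 1`; then
the period `s j` of `x[1..j]` spreads the constant prefix `x[1..j₀]` over the whole cover at `j`,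
again against minimality.
-/

theorem Finset.sum_le_of_add_le_of_lt {ι M : Type*} [LinearOrder ι] [AddCommMonoid M]
    [PartialOrder M] [IsOrderedAddMonoid M] [CanonicallyOrderedAdd M] (s : Finset ι)
    (f g : ι → M) {N : M} (hfg : ∀ a ∈ s, ∀ b ∈ s, a < b → g a + f a ≤ g b)
    (hN : ∀ b ∈ s, g b + f b ≤ N) : ∑ i ∈ s, f i ≤ N := by
  classical
  induction s using Finset.induction_on_max generalizing N with
  | empty => simp
  | insert a s hlt ih =>
    rw [Finset.sum_insert fun ha => lt_irrefl a (hlt a ha)]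
    have hs : ∑ i ∈ s, f i ≤ g a :=
      ih (fun b hb c hc => hfg b (mem_insert_of_mem hb) c (mem_insert_of_mem hc))
        fun b hb => hfg b (mem_insert_of_mem hb) a (mem_insert_self a s) (hlt b hb)
    calc f a + ∑ i ∈ s, f i ≤ f a + g a := by gcongr
      _ = g a + f a := add_comm _ _
      _ ≤ N := hN a (mem_insert_self a s)

section

variable {α : Type*}

-- Positions are 0-based here, unlike in `IsCover`.
theorem isCover_iff {w y : List α} :
    IsCover w y ↔ w.length < y.length ∧
      ∀ p < y.length, ∃ i ≤ p, p < i + w.length ∧ w <+: y.drop i := by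
  classical
  constructor
  · rintro ⟨hlt, P, hP, hocc, hcov⟩
    refine ⟨hlt, fun p hp => ?_⟩
    have hmem : p + 1 ∈ P.biUnion fun i => Finset.Icc i (i + w.length - 1) := by
      rw [hcov]; exact Finset.mem_Icc.2 ⟨by omega, hp⟩
    obtain ⟨i, hiP, hpi⟩ := Finset.mem_biUnion.1 hmem
    rw [Finset.mem_Icc] at hpi
    have := (hP i hiP).1
    exact ⟨i - 1, by omega, by omega, List.prefix_iff_eq_take.2 (hocc i hiP).symm⟩
  · rintro ⟨hlt, hcov⟩
    refine ⟨hlt, (Finset.Icc 1 y.length).filter fun i => w <+: y.drop (i - 1), ?_, ?_, ?_⟩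
    · intro i hi
      obtain ⟨hi, hpre⟩ := Finset.mem_filter.1 hi
      have := hpre.length_le
      rw [List.length_drop] at this
      rw [Finset.mem_Icc] at hi
      omega
    · intro i hi
      exact (List.prefix_iff_eq_take.1 (Finset.mem_filter.1 hi).2).symm
    · ext q
      simp only [Finset.mem_biUnion, Finset.mem_filter, Finset.mem_Icc]
      constructor
      · rintro ⟨i, ⟨⟨hi1, -⟩, hpre⟩, hiq, hqi⟩
        have := hpre.length_le
        rw [List.length_drop] at this
        omega
      · rintro ⟨hq1, hq⟩
        obtain ⟨i, hip, hpi, hpre⟩ := hcov (q - 1) (by omega)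
        exact ⟨i + 1, ⟨⟨by omega, by omega⟩, by simpa using hpre⟩, by omega, by omega⟩

namespace IsCover

variable {u w y : List α}

theorem length_pos (h : IsCover w y) : 0 < w.length := by
  obtain ⟨hlt, hcov⟩ := isCover_iff.1 h
  obtain ⟨i, hi, hpi, -⟩ := hcov 0 (by omega)
  omega

theorem isPrefix (h : IsCover w y) : w <+: y := by
  obtain ⟨hlt, hcov⟩ := isCover_iff.1 h
  obtain ⟨i, hi, -, hpre⟩ := hcov 0 (by omega)
  obtain rfl : i = 0 := by omega
  simpa using hpre

theorem isSuffix (h : IsCover w y) : w <:+ y := by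
  obtain ⟨hlt, hcov⟩ := isCover_iff.1 h
  obtain ⟨i, hi, hpi, hpre⟩ := hcov (y.length - 1) (by omega)
  have := hpre.length_le
  rw [List.length_drop] at this
  rw [hpre.eq_of_length (by rw [List.length_drop]; omega)]
  exact List.drop_suffix i y

theorem isPrefix_drop_sub {x : List α} {j : ℕ} (h : IsCover w (x.take j)) (hj : j ≤ x.length) :
    w <+: x.drop (j - w.length) := by
  have hw := List.suffix_iff_eq_drop.1 h.isSuffix
  rw [List.length_take, min_eq_left hj] at hw
  have key : (x.take j).drop (j - w.length) <+: x.drop (j - w.length) :=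
    (List.take_prefix j x).drop _
  rwa [← hw] at key

theorem trans (hu : IsCover u w) (hw : IsCover w y) : IsCover u y := by
  rw [isCover_iff] at *
  refine ⟨hu.1.trans hw.1, fun p hp => ?_⟩
  obtain ⟨i, hip, hpi, hwi⟩ := hw.2 p hp
  obtain ⟨k, hkp, hpk, huk⟩ := hu.2 (p - i) (by omega)
  refine ⟨i + k, by omega, by omega, ?_⟩
  rw [← List.drop_drop]
  exact huk.trans (hwi.drop k)

theorem hasPeriod_one (h : IsCover w y) (hw : w.length = 1) : y.HasPeriod 1 := by
  have hconst : ∀ p < y.length, y[p]? = w[0]? := by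
    intro p hp
    obtain ⟨i, hip, hpi, hpre⟩ := (isCover_iff.1 h).2 p hp
    obtain rfl : i = p := by omega
    have hp0 := List.prefix_iff_getElem?.1 hpre 0 (by omega)
    rw [List.getElem?_drop, add_zero] at hp0
    rw [hp0, List.getElem?_eq_getElem]
  rw [List.hasPeriod_iff_getElem?]
  intro i hi
  rw [hconst i (by omega), hconst (i + 1) (by omega)]

end IsCover

namespace List.HasPeriod

variable {w : List α} {p q m : ℕ}

theorem of_drop_prefix (h : w.drop p <+: w) : w.HasPeriod p := by
  simpa [List.HasPeriod] using (List.prefix_append_right_inj (w.take p)).2 h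

theorem isCover_drop (hw : w.HasPeriod p) (hp : 0 < p) (h2p : 2 * p ≤ w.length) :
    IsCover (w.drop p) w := by
  rw [isCover_iff, List.length_drop]
  refine ⟨by omega, fun i hi => ?_⟩
  by_cases hip : i < w.length - p
  · exact ⟨0, by omega, by omega, by simpa using hw.drop_prefix p⟩
  · exact ⟨p, by omega, by omega, List.prefix_refl _⟩

theorem of_take (hp : w.HasPeriod p) (hp0 : 0 < p) (hq : (w.take m).HasPeriod q)
    (hm : p + q ≤ m) : w.HasPeriod q := by
  rw [List.hasPeriod_iff_getElem?] at *
  intro i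
  induction i using Nat.strong_induction_on with
  | _ i ih =>
    intro hi
    by_cases him : i + q < m
    · simpa [List.getElem?_take, show i < m by omega, him] using
        hq i (by rw [List.length_take]; omega)
    · have hback : ∀ k, p ≤ k → k < w.length → w[k - p]? = w[k]? := fun k hk hkw => by
        simpa [Nat.sub_add_cancel hk] using hp (k - p) (by omega)
      calc w[i]? = w[i - p]? := (hback i (by omega) (by omega)).symm
        _ = w[i - p + q]? := ih (i - p) (by omega) (by omega)
        _ = w[i + q]? := by
          rw [show i - p + q = i + q - p by omega]; exact hback (i + q) (by omega) (by omega)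

end List.HasPeriod

theorem List.hasPeriod_of_isPrefix_drop {w₀ w x : List α} {a d : ℕ} (h₀ : w₀ <+: x)
    (h : w <+: x) (ha₀ : w₀ <+: x.drop a) (ha : w <+: x.drop (a + d))
    (hlen : w₀.length ≤ d + w.length) : w₀.HasPeriod d := by
  have hdrop : w₀.drop d <+: w := by
    refine List.prefix_of_prefix_length_le ?_ ha (by rw [List.length_drop]; omega)
    rw [← List.drop_drop]
    exact ha₀.drop d
  exact .of_drop_prefix <|
    List.prefix_of_prefix_length_le (hdrop.trans h) h₀ (by rw [List.length_drop]; omega)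

def IsShortestCover (w y : List α) : Prop :=
  IsCover w y ∧ ∀ v, IsCover v y → w.length ≤ v.length

namespace IsShortestCover

variable {w y : List α}

theorem lt_two_mul_of_hasPeriod {d : ℕ} (h : IsShortestCover w y) (hd : w.HasPeriod d)
    (hd0 : 0 < d) : w.length < 2 * d := by
  by_contra! h2d
  have := h.2 _ ((hd.isCover_drop hd0 h2d).trans h.1)
  rw [List.length_drop] at this
  have := h.1.length_pos
  omega

theorem length_eq_one_of_hasPeriod_one_take {m : ℕ} (h : IsShortestCover w y)
    (hm : (y.take m).HasPeriod 1) (hlt : y.length - w.length < m) : w.length = 1 := by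
  have hlen := h.1.1
  have hpos := h.1.length_pos
  have hy : y.HasPeriod (y.length - w.length) := .of_drop_prefix <| by
    rw [← List.suffix_iff_eq_drop.1 h.1.isSuffix]; exact h.1.isPrefix
  have hw : w.HasPeriod 1 := (hy.of_take (by omega) hm (by omega)).infix h.1.isPrefix.isInfix
  have := h.lt_two_mul_of_hasPeriod hw one_pos
  omega

theorem two_mul_sub_length_add_le {w₀ w x : List α} {j₀ j : ℕ}
    (h₀ : IsShortestCover w₀ (x.take j₀)) (h : IsCover w (x.take j)) (hj₀ : j₀ ≤ j)
    (hj : j ≤ x.length) (hstart : j₀ - w₀.length < j - w.length) :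
    2 * (j₀ - w₀.length) + w₀.length ≤ 2 * (j - w.length) := by
  have hlen₀ := h₀.1.1
  have hlen := h.1
  rw [List.length_take, min_eq_left (hj₀.trans hj)] at hlen₀
  rw [List.length_take, min_eq_left hj] at hlen
  have hper : w₀.HasPeriod ((j - w.length) - (j₀ - w₀.length)) :=
    List.hasPeriod_of_isPrefix_drop (h₀.1.isPrefix.trans (List.take_prefix _ _))
      (h.isPrefix.trans (List.take_prefix _ _)) (h₀.1.isPrefix_drop_sub (hj₀.trans hj))
      (by rw [Nat.add_sub_cancel' hstart.le]; exact h.isPrefix_drop_sub hj) (by omega)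
  have := h₀.lt_two_mul_of_hasPeriod hper (by omega)
  omega

end IsShortestCover

namespace IsMinCoverArray

variable {x : List α} {C : ℕ → ℕ} {j₀ j : ℕ}

theorem exists_isShortestCover (hC : IsMinCoverArray x C) (hj1 : 1 ≤ j) (hj : j ≤ x.length)
    (hne : C j ≠ 0) : ∃ w, IsShortestCover w (x.take j) ∧ C j = w.length := by
  rcases hC j hj1 hj with ⟨-, h0⟩ | ⟨w, hw, hlen, hmin⟩
  · exact absurd h0 hne
  · exact ⟨w, ⟨hw, hmin⟩, hlen⟩

theorem apply_lt (hC : IsMinCoverArray x C) (hj1 : 1 ≤ j) (hj : j ≤ x.length) : C j < j := by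
  rcases hC j hj1 hj with ⟨-, h0⟩ | ⟨w, hw, hlen, -⟩
  · omega
  · have := hw.1
    rw [List.length_take, min_eq_left hj] at this
    omega

theorem two_mul_sub_add_le (hC : IsMinCoverArray x C) (hj₀ : 1 ≤ j₀) (hlt : j₀ < j)
    (hj : j ≤ x.length) (h₀ : C j₀ ≠ 0) (h : C j ≠ 0) (hnt : ¬TotallyCovered x.length C j₀) :
    2 * (j₀ - C j₀) + C j₀ ≤ 2 * (j - C j) := by
  obtain ⟨w₀, hw₀, hC₀⟩ := hC.exists_isShortestCover hj₀ (by omega) h₀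
  obtain ⟨w, hw, hCj⟩ := hC.exists_isShortestCover (by omega) hj h
  have hlen₀ := hC.apply_lt hj₀ (hlt.le.trans hj)
  rw [hC₀, hCj]
  by_cases hstart : j₀ - w₀.length < j - w.length
  · exact hw₀.two_mul_sub_length_add_le hw.1 hlt.le hj hstart
  · have hone : w₀.length = 1 := by
      have := hw₀.1.length_pos
      by_contra hne
      exact hnt ⟨h₀, j, hlt, hj, h, by omega, by omega⟩
    have hconst : ((x.take j).take j₀).HasPeriod 1 := by
      rw [List.take_take, min_eq_left hlt.le]
      exact hw₀.1.hasPeriod_one hone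
    have := hw.length_eq_one_of_hasPeriod_one_take hconst (by rw [List.length_take]; omega)
    omega

end IsMinCoverArray

end

/-- The sum of the entries of the pruned minimal cover array is at most `2n`. -/
theorem prunedCoverArray_sum_le {α : Type*} (x : List α) (C CP : ℕ → ℕ)
    (hC : IsMinCoverArray x C) (hP : IsPrunedCoverArray x.length C CP) :
    ∑ i ∈ Finset.Icc 1 x.length, CP i ≤ 2 * x.length := by
  set S := (Finset.Icc 1 x.length).filter fun j => CP j ≠ 0
  have hS : ∀ j ∈ S, 1 ≤ j ∧ j ≤ x.length ∧ C j ≠ 0 ∧ ¬TotallyCovered x.length C j ∧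
      CP j = C j := by
    intro j hj
    obtain ⟨hj, hCP⟩ := Finset.mem_filter.1 hj
    obtain ⟨hj1, hjn⟩ := Finset.mem_Icc.1 hj
    have hnt : ¬TotallyCovered x.length C j := fun ht => hCP ((hP j hj1 hjn).1 ht)
    have hkeep := (hP j hj1 hjn).2 hnt
    exact ⟨hj1, hjn, hkeep ▸ hCP, hnt, hkeep⟩
  calc ∑ i ∈ Finset.Icc 1 x.length, CP i = ∑ i ∈ S, C i := by
        rw [← Finset.sum_filter_ne_zero]
        exact Finset.sum_congr rfl fun j hj => (hS j hj).2.2.2.2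
    _ ≤ 2 * x.length := by
      refine Finset.sum_le_of_add_le_of_lt S C (fun j => 2 * (j - C j))
        (fun a ha b hb hab => ?_) fun b hb => ?_
      · obtain ⟨ha1, -, haC, hant, -⟩ := hS a ha
        obtain ⟨-, hbn, hbC, -⟩ := hS b hb
        exact hC.two_mul_sub_add_le ha1 hab hbn haC hbC hant
      · obtain ⟨hb1, hbn, -⟩ := hS b hb
        have := hC.apply_lt hb1 hbn
        omega
end

section
/- Let x be a string and let w be a cover of x such that w is superprimitive. Then w is the shortest cover of x, i.e., every cover v of x satisfies |v| ≥ |w|. -/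
/-! A cover `v` of `x` shorter than another cover `w` of `x` is itself a cover of `w`: `w` is a
prefix of `x`, so the occurrences of `v` lying inside that prefix are occurrences in `w`, and the
positions of `w` they miss are caught by the occurrence of `v` as a suffix of `w` (both are
suffixes of `x`). -/

theorem List.take_drop_take_of_add_le {α : Type*} {l : List α} {i k m : ℕ} (h : i + k ≤ m) :
    ((l.take m).drop i).take k = (l.drop i).take k := by
  rw [List.drop_take, List.take_take, min_eq_left (by omega)]

namespace IsCover

variable {α : Type*} {v w x : List α}

theorem exists_occurrence_mem_Icc (hv : IsCover v x) {t : ℕ} (ht : t ∈ Finset.Icc 1 x.length) :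
    ∃ i, 1 ≤ i ∧ i ≤ x.length - v.length + 1 ∧ (x.drop (i - 1)).take v.length = v ∧
      i ≤ t ∧ t ≤ i + v.length - 1 := by
  obtain ⟨-, P, hP_range, hP_occ, hP_cover⟩ := hv
  rw [← hP_cover] at ht
  obtain ⟨i, hiP, hti⟩ := Finset.mem_biUnion.mp ht
  exact ⟨i, (hP_range i hiP).1, (hP_range i hiP).2, hP_occ i hiP, (Finset.mem_Icc.mp hti).1,
    (Finset.mem_Icc.mp hti).2⟩

theorem isPrefix_s9 (hv : IsCover v x) : v <+: x := by
  obtain ⟨i, hi1, -, hocc, hit, -⟩ :=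
    hv.exists_occurrence_mem_Icc (t := 1) (Finset.mem_Icc.mpr ⟨le_rfl, by have := hv.1; omega⟩)
  obtain rfl : i = 1 := by omega
  exact List.prefix_iff_eq_take.mpr hocc.symm

theorem isSuffix_s9 (hv : IsCover v x) : v <:+ x := by
  have hvx := hv.1
  obtain ⟨i, -, hin, hocc, -, hti⟩ :=
    hv.exists_occurrence_mem_Icc (t := x.length) (Finset.mem_Icc.mpr ⟨by omega, le_rfl⟩)
  obtain rfl : i = x.length - v.length + 1 := by omega
  rw [Nat.add_sub_cancel, List.take_of_length_le (by simp; omega)] at hocc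
  exact List.suffix_iff_eq_drop.mpr hocc.symm

theorem isCover_of_length_lt (hv : IsCover v x) (hw : IsCover w x)
    (hlt : v.length < w.length) : IsCover v w := by
  have hwx : x.take w.length = w := (List.prefix_iff_eq_take.mp hw.isPrefix_s9).symm
  have hvw : w.drop (w.length - v.length) = v :=
    (List.suffix_iff_eq_drop.mp
      (List.suffix_of_suffix_length_le hv.isSuffix_s9 hw.isSuffix_s9 hlt.le)).symm
  have hwlen := hw.1
  obtain ⟨-, P, hP_range, hP_occ, hP_cover⟩ := hv
  refine ⟨hlt, insert (w.length - v.length + 1)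
    (P.filter fun i => i + v.length ≤ w.length + 1), ?_, ?_, ?_⟩
  · intro i hi
    rcases Finset.mem_insert.mp hi with rfl | hi
    · omega
    · have := hP_range i (Finset.mem_filter.mp hi).1
      have := (Finset.mem_filter.mp hi).2
      omega
  · intro i hi
    rcases Finset.mem_insert.mp hi with rfl | hi
    · rw [Nat.add_sub_cancel, hvw, List.take_of_length_le le_rfl]
    · obtain ⟨hiP, hiw⟩ := Finset.mem_filter.mp hi
      have := hP_range i hiP
      rw [← hwx, List.take_drop_take_of_add_le (by omega), hP_occ i hiP]
  · ext t
    simp only [Finset.mem_biUnion, Finset.mem_Icc, Finset.mem_insert, Finset.mem_filter]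
    constructor
    · rintro ⟨i, rfl | ⟨hiP, hiw⟩, hti⟩
      · omega
      · have := hP_range i hiP
        omega
    · rintro ⟨ht1, htw⟩
      have ht : t ∈ Finset.Icc 1 x.length := Finset.mem_Icc.mpr ⟨ht1, by omega⟩
      rw [← hP_cover] at ht
      obtain ⟨i, hiP, hti⟩ := Finset.mem_biUnion.mp ht
      rw [Finset.mem_Icc] at hti
      by_cases hiw : i + v.length ≤ w.length + 1
      · exact ⟨i, Or.inr ⟨hiP, hiw⟩, hti⟩
      · exact ⟨w.length - v.length + 1, Or.inl rfl, by omega⟩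

end IsCover

/-- A superprimitive cover of `x` is the shortest cover of `x`. -/
theorem superprimitive_cover_is_shortest {α : Type*} (x w : List α)
    (hw : IsCover w x) (hsp : ∀ u : List α, ¬ IsCover u w) :
    ∀ v : List α, IsCover v x → w.length ≤ v.length :=
  fun v hv => not_lt.mp fun hlt => hsp v (hv.isCover_of_length_lt hw hlt)
end
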